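/- Let B be a quaternion algebra over a field K and let Γ ≤ B^1 be a group containing O^1 with finite index [Γ : O^1] < ∞, where O is an order of B whose norm-one units generate O over O_K. Then the O_K-algebra O_K[Γ] generated by Γ is an order of B. -/
import Mathlib


open NumberField

/-- `O` is an order of the `K`-algebra `B`: an `𝓞 K`-subalgebra which is finitely
generated as an `𝓞 K`-module and spans `B` over `K`. -/
def IsOrderOf (K B : Type) [Field K] [NumberField K] [Ring B] [Algebra K B]
    [Algebra (𝓞 K) B] (O : Subalgebra (𝓞 K) B) : Prop :=
  (Subalgebra.toSubmodule O).FG ∧ Submodule.span K (O : Set B) = ⊤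

/-- Let `B` be a quaternion algebra over a number field `K`, `O` an order of `B`
whose group `O¹` of norm-one units generates `O` over `𝓞 K`, and `Γ ≤ B¹` a group
of norm-one elements containing `O¹` with finite index `[Γ : O¹]`. Then the
`𝓞 K`-algebra generated by `Γ` is again an order of `B`. -/
theorem statement10 (K B : Type) [Field K] [NumberField K] [Ring B] [Algebra K B]
    [Algebra (𝓞 K) B] [IsScalarTower (𝓞 K) K B]
    (hquat : Module.finrank K B = 4)
    (hcentral : ∀ x : B, (∀ y : B, x * y = y * x) → ∃ c : K, x = algebraMap K B c)
    (nrd : B →* K)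
    (O : Subalgebra (𝓞 K) B) (hO : IsOrderOf K B O)
    (O1 Γ : Subgroup Bˣ)
    (hO1 : ∀ u : Bˣ, u ∈ O1 ↔
      ((u : B) ∈ O ∧ ((u⁻¹ : Bˣ) : B) ∈ O ∧ nrd (u : B) = 1))
    (hgen : Algebra.adjoin (𝓞 K) ((fun u : Bˣ => (u : B)) '' O1) = O)
    (hΓ1 : ∀ u ∈ Γ, nrd ((u : Bˣ) : B) = 1)
    (hsub : O1 ≤ Γ) (hfin : (O1.subgroupOf Γ).index ≠ 0) :
    IsOrderOf K B (Algebra.adjoin (𝓞 K) ((fun u : Bˣ => (u : B)) '' Γ)) := by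
  classical
  have hfinQ : Finite (Γ ⧸ O1.subgroupOf Γ) := Nat.finite_of_card_ne_zero hfin
  constructor
  · -- FG
    set f : (Γ ⧸ O1.subgroupOf Γ) → B := fun q => ((Quotient.out q : Γ) : Bˣ) with hf
    set N : Submodule (𝓞 K) B :=
      ⨆ q, Submodule.map (LinearMap.mulLeft (𝓞 K) (f q)) (Subalgebra.toSubmodule O) with hN
    have hNfg : N.FG := by
      refine Submodule.fg_iSup _ fun q => Submodule.FG.map _ hO.1
    have hle : Subalgebra.toSubmodule (Algebra.adjoin (𝓞 K) ((fun u : Bˣ => (u : B)) '' Γ)) ≤ N := by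
      rw [Algebra.adjoin_eq_span, Submodule.span_le]
      have hclosed : (Submonoid.closure ((fun u : Bˣ => (u : B)) '' ↑Γ) : Set B)
          = ((Γ.toSubmonoid.map (Units.coeHom B) : Submonoid B) : Set B) := by
        rw [← Submonoid.closure_eq (Γ.toSubmonoid.map (Units.coeHom B))]
        congr 1
      rw [hclosed]
      rintro x ⟨γ, hγ, rfl⟩
      set g : Γ := ⟨γ, hγ⟩
      set q : Γ ⧸ O1.subgroupOf Γ := QuotientGroup.mk g with hq
      have hout : (QuotientGroup.mk (Quotient.out q) : Γ ⧸ O1.subgroupOf Γ) = q :=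
        Quotient.out_eq q
      have hmem : (Quotient.out q)⁻¹ * g ∈ O1.subgroupOf Γ := by
        rw [hq] at hout
        exact (QuotientGroup.eq).mp hout
      have hmemO : (((((Quotient.out q)⁻¹ * g : Γ) : Bˣ)) : B) ∈ O := by
        have := (hO1 (((Quotient.out q)⁻¹ * g : Γ) : Bˣ)).mp hmem
        exact this.1
      refine Submodule.mem_iSup_of_mem q ?_
      refine ⟨_, hmemO, ?_⟩
      have h1 : Quotient.out q * ((Quotient.out q)⁻¹ * g) = g := mul_inv_cancel_left _ _
      show (((Quotient.out q : Γ) : Bˣ) : B) * ((((Quotient.out q)⁻¹ * g : Γ) : Bˣ) : B) = _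
      rw [← Units.val_mul, ← Subgroup.coe_mul, h1]
      rfl
    have : IsNoetherian (𝓞 K) N := isNoetherian_of_fg_of_noetherian N hNfg
    have := IsNoetherian.noetherian ((Subalgebra.toSubmodule
      (Algebra.adjoin (𝓞 K) ((fun u : Bˣ => (u : B)) '' Γ))).comap N.subtype)
    have hmap := Submodule.FG.map N.subtype this
    rwa [Submodule.map_comap_subtype, inf_eq_right.mpr hle] at hmap
  · -- spanning
    have hle : (O : Set B) ⊆ (Algebra.adjoin (𝓞 K) ((fun u : Bˣ => (u : B)) '' Γ) : Set B) := by
      rw [← hgen]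
      exact Algebra.adjoin_mono (Set.image_mono hsub)
    rw [← top_le_iff, ← hO.2]
    exact Submodule.span_mono hle
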